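/- arXiv:2405.11220 — 2 statements merged into one kernel-verified Lean document; each statement's English description precedes it below -/
import Mathlib

section
/- Let T = E₄ and Q be the 4×4 symmetric nonnegative integer matrix with rows (0,0,1,1),(0,2,0,0),(1,0,0,1),(1,0,1,0). Then the only symmetric nonnegative integer 4×4 matrices U satisfying QU = U + TU and U² = E + Q + U + TU are U₁ with rows (0,1,0,0),(1,2,1,1),(0,1,0,0),(0,1,0,0) and U₂ with rows (1,0,1,1),(0,3,0,0),(1,0,1,1),(1,0,1,1). -/
/-!
From `QU = 2U` the rows `0, 2, 3` of `U` coincide (the three row equations force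
`3 (U₂ - U₀) = 0`), so by symmetry `U` is determined by `a = U₀₀`, `b = U₀₁`, `c = U₁₁`.
Three entries of `U² = E + Q + 2U` then give `3a² + b² = 1 + 2a`, `b (3a + c) = 2b` and
`3b² + c² = 3 + 2c`; the first leaves only `(a, b) = (0, ±1)` or `(1, 0)`, and
nonnegativity picks out the two solutions.
-/

open Matrix

def tripleRowMatrix (a b c : ℤ) : Matrix (Fin 4) (Fin 4) ℤ :=
  !![a,b,a,a; b,c,b,b; a,b,a,a; a,b,a,a]

lemma rows_eq_row_zero_of_mul_eq_add_self {U : Matrix (Fin 4) (Fin 4) ℤ}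
    (h : !![0,0,1,1; 0,2,0,0; 1,0,0,1; 1,0,1,0] * U = U + U) :
    U 2 = U 0 ∧ U 3 = U 0 := by
  have row (i j : Fin 4) := congrFun (congrFun h i) j
  simp only [mul_apply, Fin.sum_univ_four, Matrix.add_apply] at row
  refine ⟨funext fun j => ?_, funext fun j => ?_⟩ <;>
  · have h0 := row 0 j
    have h2 := row 2 j
    have h3 := row 3 j
    simp at h0 h2 h3
    omega

lemma Matrix.IsSymm.eq_tripleRowMatrix {U : Matrix (Fin 4) (Fin 4) ℤ} (hU : U.IsSymm)
    (h2 : U 2 = U 0) (h3 : U 3 = U 0) : U = tripleRowMatrix (U 0 0) (U 0 1) (U 1 1) := by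
  have col (k : Fin 4) (hk : U k = U 0) (i : Fin 4) : U i k = U i 0 := by
    rw [← hU.apply i k, ← hU.apply i 0, hk]
  ext i j
  fin_cases i <;> fin_cases j <;>
    simp [tripleRowMatrix, h2, h3, col 2 h2, col 3 h3, ← hU.apply 0 1]

lemma tripleRowMatrix_params_of_mul_self {a b c : ℤ}
    (h : tripleRowMatrix a b c * tripleRowMatrix a b c =
      1 + !![0,0,1,1; 0,2,0,0; 1,0,0,1; 1,0,1,0] + tripleRowMatrix a b c + tripleRowMatrix a b c) :
    3 * a ^ 2 + b ^ 2 = 1 + 2 * a ∧ b * (3 * a + c) = 2 * b ∧ 3 * b ^ 2 + c ^ 2 = 3 + 2 * c := by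
  have entry (i j : Fin 4) := congrFun (congrFun h i) j
  have e00 := entry 0 0
  have e01 := entry 0 1
  have e11 := entry 1 1
  simp [tripleRowMatrix, mul_apply, Fin.sum_univ_four] at e00 e01 e11
  exact ⟨by linear_combination e00, by linear_combination e01, by linear_combination e11⟩

lemma tripleRowMatrix_params_eq {a b c : ℤ} (hb : 0 ≤ b) (hc : 0 ≤ c)
    (h00 : 3 * a ^ 2 + b ^ 2 = 1 + 2 * a) (h01 : b * (3 * a + c) = 2 * b)
    (h11 : 3 * b ^ 2 + c ^ 2 = 3 + 2 * c) :
    (a = 0 ∧ b = 1 ∧ c = 2) ∨ (a = 1 ∧ b = 0 ∧ c = 3) := by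
  obtain ⟨ha0, ha1⟩ : 0 ≤ a ∧ a ≤ 1 := by constructor <;> nlinarith
  interval_cases a
  · obtain rfl : b = 1 := by nlinarith
    omega
  · obtain rfl : b = 0 := by nlinarith
    have : (c - 3) * (c + 1) = 0 := by linear_combination h11
    rcases mul_eq_zero.1 this with h | h <;> omega

/-- With `T = E₄` and
`Q = !![0,0,1,1; 0,2,0,0; 1,0,0,1; 1,0,1,0]`, the only symmetric nonnegative integer
`4 × 4` matrices `U` satisfying `QU = U + TU` and `U² = E + Q + U + TU` are the two
listed matrices. -/
theorem stmt_6 (U : Matrix (Fin 4) (Fin 4) ℤ)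
    (hUn : ∀ i j, 0 ≤ U i j) (hUs : U.IsSymm)
    (T : Matrix (Fin 4) (Fin 4) ℤ) (hT : T = 1)
    (Q : Matrix (Fin 4) (Fin 4) ℤ)
    (hQ : Q = !![0,0,1,1; 0,2,0,0; 1,0,0,1; 1,0,1,0])
    (e1 : Q * U = U + T * U) (e2 : U * U = 1 + Q + U + T * U) :
    U = !![0,1,0,0; 1,2,1,1; 0,1,0,0; 0,1,0,0] ∨
    U = !![1,0,1,1; 0,3,0,0; 1,0,1,1; 1,0,1,1] := by
  subst hT hQ
  rw [Matrix.one_mul] at e1 e2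
  obtain ⟨h2, h3⟩ := rows_eq_row_zero_of_mul_eq_add_self e1
  have hU := hUs.eq_tripleRowMatrix h2 h3
  rw [hU] at e2
  obtain ⟨h00, h01, h11⟩ := tripleRowMatrix_params_of_mul_self e2
  rw [hU]
  rcases tripleRowMatrix_params_eq (hUn 0 1) (hUn 1 1) h00 h01 h11 with
    ⟨ha, hb, hc⟩ | ⟨ha, hb, hc⟩
  · left
    rw [ha, hb, hc, tripleRowMatrix]
  · right
    rw [ha, hb, hc, tripleRowMatrix]
end

section
/- The triple of 4×4 matrices T = E₄, Q with rows (0,0,1,1),(0,2,0,0),(1,0,0,1),(1,0,1,0), and U with rows (0,1,0,0),(1,2,1,1),(0,1,0,0),(0,1,0,0) satisfies T² = E, TQ = QT = Q, Q² = E + T + Q, QU = U + TU, U² = E + Q + U + TU, so it defines a based module of rank 4 over r(S₄) (with W = TU representing Vρ₃). -/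
private lemma one_fin_four' : (1 : Matrix (Fin 4) (Fin 4) ℤ) =
    !![1,0,0,0; 0,1,0,0; 0,0,1,0; 0,0,0,1] := by
  ext i j
  fin_cases i <;> fin_cases j <;> rfl

/-- The triple `T = E₄`, `Q = !![0,0,1,1; 0,2,0,0; 1,0,0,1; 1,0,1,0]`,
`U = !![0,1,0,0; 1,2,1,1; 0,1,0,0; 0,1,0,0]` consists of symmetric nonnegative
integer matrices satisfying `T² = E`, `TQ = QT = Q`, `Q² = E + T + Q`,
`QU = U + TU`, `U² = E + Q + U + TU`, hence defines a based module of rank 4 over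
`r(S₄)` (with `W = TU` representing `Vρ₃`). -/
theorem stmt_7 (T Q U : Matrix (Fin 4) (Fin 4) ℤ)
    (hT : T = 1)
    (hQ : Q = !![0,0,1,1; 0,2,0,0; 1,0,0,1; 1,0,1,0])
    (hU : U = !![0,1,0,0; 1,2,1,1; 0,1,0,0; 0,1,0,0]) :
    (∀ i j, 0 ≤ T i j) ∧ (∀ i j, 0 ≤ Q i j) ∧ (∀ i j, 0 ≤ U i j) ∧
    T.IsSymm ∧ Q.IsSymm ∧ U.IsSymm ∧
    T * T = 1 ∧ T * Q = Q ∧ Q * T = Q ∧ Q * Q = 1 + T + Q ∧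
    Q * U = U + T * U ∧ U * U = 1 + Q + U + T * U := by
  subst hT hQ hU
  have e1 : ∀ i j, (0:ℤ) ≤ (1 : Matrix (Fin 4) (Fin 4) ℤ) i j := by
    rw [one_fin_four']; intro i j; fin_cases i <;> fin_cases j <;> norm_num
  have e2 : ∀ i j, (0:ℤ) ≤ (!![0,0,1,1; 0,2,0,0; 1,0,0,1; 1,0,1,0] : Matrix (Fin 4) (Fin 4) ℤ) i j := by
    intro i j; fin_cases i <;> fin_cases j <;> norm_num
  have e3 : ∀ i j, (0:ℤ) ≤ (!![0,1,0,0; 1,2,1,1; 0,1,0,0; 0,1,0,0] : Matrix (Fin 4) (Fin 4) ℤ) i j := by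
    intro i j; fin_cases i <;> fin_cases j <;> norm_num
  have s1 : (1 : Matrix (Fin 4) (Fin 4) ℤ).IsSymm := Matrix.isSymm_one
  have s2 : (!![0,0,1,1; 0,2,0,0; 1,0,0,1; 1,0,1,0] : Matrix (Fin 4) (Fin 4) ℤ).IsSymm := by
    apply Matrix.IsSymm.ext; intro i j; fin_cases i <;> fin_cases j <;> rfl
  have s3 : (!![0,1,0,0; 1,2,1,1; 0,1,0,0; 0,1,0,0] : Matrix (Fin 4) (Fin 4) ℤ).IsSymm := by
    apply Matrix.IsSymm.ext; intro i j; fin_cases i <;> fin_cases j <;> rfl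
  refine ⟨e1, e2, e3, s1, s2, s3, by simp, by simp, by simp, ?_, ?_, ?_⟩
  · rw [one_fin_four']; ext i j; fin_cases i <;> fin_cases j <;>
      simp [Matrix.mul_apply, Fin.sum_univ_four] <;> rfl
  · ext i j; fin_cases i <;> fin_cases j <;>
      simp [Matrix.mul_apply, Fin.sum_univ_four] <;> rfl
  · rw [one_fin_four']; ext i j; fin_cases i <;> fin_cases j <;>
      simp [Matrix.mul_apply, Fin.sum_univ_four] <;> rfl
end
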